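/- arXiv:math/0412168 — 5 statements merged into one kernel-verified Lean document; each statement's English description precedes it below -/
import Mathlib

section
/- Let C be a finite-dimensional split semisimple K-algebra with a symmetric nondegenerate trace form (c,c') = z(cc') = z(c'c), dual bases (c_i), (c'_i) with (c_i, c'_j) = δ_{ij}. Then for any two simple modules E_u, E_{u'} and any invertible c ∈ C, Σ_i tr(c_i c, E_u) tr(c⁻¹ c'_i, E_{u'}) = δ_{u,u'} f_u dim E_u, where f_u ∈ K* depends only on u (not on the choice of dual bases or of c). -/
/-! By nondegeneracy of `z`, the character `χ_u = tr(·, E_u)` is represented as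
`χ_u(x) = z(x d_u)`, and the symmetry of `z` and of the trace makes `d_u` central.
Expanding `x c⁻¹` in the dual bases shows `Σ_i χ_u(c_i c) c⁻¹ c'_i = d_u`, so the sum in
question is `χ_{u'}(d_u)`. Since `C ≅ ∏ End(E_u)`, the central element `d_u` acts on each
`E_{u'}` by a scalar. For `u' ≠ u` this scalar is `0`, because `d_u` is killed by the
idempotent acting as `1` on `E_{u'}` and as `0` on `E_u`; on `E_u` it is some `f_u`, which
is nonzero since otherwise `d_u = 0` and `χ_u` would vanish. -/

open Module LinearMap

theorem LinearMap.trace_ne_zero (R M : Type*) [CommRing R] [AddCommGroup M] [Module R M]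
    [Module.Free R M] [Module.Finite R M] [Nontrivial M] : trace R M ≠ 0 := by
  obtain ⟨x, hx⟩ := exists_ne (0 : M)
  obtain ⟨f, hf⟩ := Projective.exists_dual_ne_zero R hx
  intro h
  exact hf (by simpa [h] using (trace_smulRight f x).symm)

theorem AlgHom.exists_apply_eq_algebraMap_of_mem_center {K A D : Type*} [CommSemiring K]
    [Semiring A] [Semiring D] [Algebra K A] [Algebra K D] [Algebra.IsCentral K D]
    (ρ : A →ₐ[K] D) (hρ : Function.Surjective ρ) {a : A} (ha : a ∈ Subalgebra.center K A) :
    ∃ r : K, ρ a = algebraMap K D r := by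
  refine (Algebra.IsCentral.mem_center_iff K).mp (Subalgebra.mem_center_iff.mpr fun g => ?_)
  obtain ⟨x, rfl⟩ := hρ g
  rw [← map_mul, ← map_mul, Subalgebra.mem_center_iff.mp ha]

section SymmetricForm

variable {R C : Type*} [CommSemiring R] [Semiring C] [Algebra R C] (z : C →ₗ[R] R)
  {ι : Type*} [Fintype ι] [DecidableEq ι]

theorem sum_apply_mul_smul_of_dual (b : Basis ι R C) (b' : ι → C)
    (hbb : ∀ i j, z (b i * b' j) = if i = j then 1 else 0) (y : C) :
    ∑ i, z (y * b' i) • b i = y := by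
  have hcoord : ∀ j, z (y * b' j) = b.repr y j := by
    intro j
    calc z (y * b' j) = z ((∑ i, b.repr y i • b i) * b' j) := by rw [b.sum_repr]
      _ = b.repr y j := by
        simp only [Finset.sum_mul, smul_mul_assoc, map_sum, map_smul, hbb, smul_eq_mul,
          mul_ite, mul_one, mul_zero, Finset.sum_ite_eq', Finset.mem_univ, if_true]
  simpa only [hcoord] using b.sum_repr y

theorem apply_mul_sum_smul_inv_mul (φ : C →ₗ[R] R) (b : Basis ι R C) (b' : ι → C)
    (hbb : ∀ i j, z (b i * b' j) = if i = j then 1 else 0) (c : Cˣ) (x : C) :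
    z (x * ∑ i, φ (b i * c) • (↑c⁻¹ * b' i)) = φ x := by
  calc z (x * ∑ i, φ (b i * c) • (↑c⁻¹ * b' i))
      = φ ((∑ i, z (x * ↑c⁻¹ * b' i) • b i) * c) := by
        simp only [Finset.mul_sum, Finset.sum_mul, map_sum, mul_smul_comm, smul_mul_assoc,
          map_smul, smul_eq_mul, mul_assoc, mul_comm]
    _ = φ x := by rw [sum_apply_mul_smul_of_dual z b b' hbb, Units.inv_mul_cancel_right]

end SymmetricForm

section Nondegenerate

variable {K C : Type*} [Field K] [Ring C] [Algebra K C] {z : C →ₗ[K] K}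

theorem eq_of_forall_apply_mul_eq (hz : ∀ x y : C, z (x * y) = z (y * x))
    (hnd : ∀ x : C, (∀ y : C, z (x * y) = 0) → x = 0) {s t : C}
    (h : ∀ x, z (x * s) = z (x * t)) : s = t :=
  sub_eq_zero.mp <| hnd _ fun y => by rw [hz, mul_sub, map_sub, h, sub_self]

theorem exists_forall_apply_mul_eq [FiniteDimensional K C]
    (hz : ∀ x y : C, z (x * y) = z (y * x))
    (hnd : ∀ x : C, (∀ y : C, z (x * y) = 0) → x = 0) (φ : Dual K C) :
    ∃ d : C, ∀ x, z (x * d) = φ x := by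
  have hinj : Function.Injective ((LinearMap.mul K C).compr₂ z).flip := fun s t h =>
    eq_of_forall_apply_mul_eq hz hnd fun x => LinearMap.congr_fun h x
  obtain ⟨d, hd⟩ := (injective_iff_surjective_of_finrank_eq_finrank
    Subspace.dual_finrank_eq.symm).mp hinj φ
  exact ⟨d, fun x => LinearMap.congr_fun hd x⟩

theorem mem_center_of_forall_apply_mul_eq (hz : ∀ x y : C, z (x * y) = z (y * x))
    (hnd : ∀ x : C, (∀ y : C, z (x * y) = 0) → x = 0) {φ : Dual K C}
    (hφ : ∀ x y, φ (x * y) = φ (y * x)) {d : C} (hd : ∀ x, z (x * d) = φ x) :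
    d ∈ Subalgebra.center K C :=
  Subalgebra.mem_center_iff.mpr fun a => eq_of_forall_apply_mul_eq hz hnd fun x => by
    rw [← mul_assoc, hd, hφ, ← hd, mul_assoc, hz, mul_assoc]

end Nondegenerate

section SplitSemisimple

variable {K C : Type*} [Field K] [Ring C] [Algebra K C] {z : C →ₗ[K] K}
  {U : Type*} {E : U → Type*} [∀ u, AddCommGroup (E u)] [∀ u, Module K (E u)]
  {ρ : ∀ u, C →ₐ[K] Module.End K (E u)}

theorem apply_eq_zero_of_forall_apply_mul_eq
    (hρ : Function.Surjective fun c u => ρ u c)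
    (hz : ∀ x y : C, z (x * y) = z (y * x))
    (hnd : ∀ x : C, (∀ y : C, z (x * y) = 0) → x = 0) {u u' : U} (huu' : u ≠ u')
    {φ : Dual K (Module.End K (E u))} {d : C} (hd : ∀ x, z (x * d) = φ (ρ u x)) :
    ρ u' d = 0 := by
  classical
  obtain ⟨e, he⟩ := hρ (Pi.single u' 1)
  have he' : ρ u' e = 1 := by simpa using congrFun he u'
  have he0 : ρ u e = 0 := by simpa [huu'] using congrFun he u
  have hed : e * d = 0 := eq_of_forall_apply_mul_eq hz hnd fun x => by
    rw [← mul_assoc, hd, map_mul, he0, mul_zero, map_zero, mul_zero, map_zero]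
  calc ρ u' d = ρ u' (e * d) := by rw [map_mul, he', one_mul]
    _ = 0 := by rw [hed, map_zero]

theorem apply_ne_zero_of_forall_apply_mul_eq_trace
    [∀ u, FiniteDimensional K (E u)] [∀ u, Nontrivial (E u)]
    (hρ : Function.Bijective fun c u => ρ u c)
    (hz : ∀ x y : C, z (x * y) = z (y * x))
    (hnd : ∀ x : C, (∀ y : C, z (x * y) = 0) → x = 0) {u : U} {d : C}
    (hd : ∀ x, z (x * d) = trace K (E u) (ρ u x)) :
    ρ u d ≠ 0 := by
  intro hud
  have hd0 : d = 0 := hρ.1 <| funext fun w => by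
    change ρ w d = ρ w 0
    obtain rfl | hw := eq_or_ne u w
    · rw [hud, map_zero]
    · rw [apply_eq_zero_of_forall_apply_mul_eq hρ.2 hz hnd hw hd, map_zero]
  refine trace_ne_zero K (E u) (LinearMap.ext fun g => ?_)
  obtain ⟨x, rfl⟩ := (Function.surjective_eval u).comp hρ.2 g
  simpa [hd0] using (hd x).symm

end SplitSemisimple

theorem stmt_5_general {K C : Type*} [Field K] [Ring C] [Algebra K C] [FiniteDimensional K C]
    {U : Type*} [DecidableEq U]
    (E : U → Type*) [∀ u, AddCommGroup (E u)] [∀ u, Module K (E u)]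
    [∀ u, FiniteDimensional K (E u)] [∀ u, Nontrivial (E u)]
    (ρ : ∀ u, C →ₐ[K] Module.End K (E u))
    (hsplit : Function.Bijective (fun c : C => fun u : U => ρ u c))
    (z : C →ₗ[K] K) (hz : ∀ x y : C, z (x * y) = z (y * x))
    (hnd : ∀ x : C, (∀ y : C, z (x * y) = 0) → x = 0) :
    ∃ f : U → K, (∀ u, f u ≠ 0) ∧
      ∀ (ι : Type) [Fintype ι] [DecidableEq ι] (b : Module.Basis ι K C) (b' : ι → C),
        (∀ i j : ι, z (b i * b' j) = if i = j then 1 else 0) →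
        ∀ (c : Cˣ) (u u' : U),
          (∑ i : ι, LinearMap.trace K (E u) (ρ u (b i * (c : C))) *
              LinearMap.trace K (E u') (ρ u' (((c⁻¹ : Cˣ) : C) * b' i))) =
            (if u = u' then (1 : K) else 0) * f u * (Module.finrank K (E u) : K) := by
  let χ : ∀ u, Dual K C := fun u => trace K (E u) ∘ₗ (ρ u).toLinearMap
  choose d hd using fun u => exists_forall_apply_mul_eq hz hnd (χ u)
  have hcenter : ∀ u, d u ∈ Subalgebra.center K C := fun u =>
    mem_center_of_forall_apply_mul_eq hz hnd
      (fun x y => by simp only [χ, coe_comp, Function.comp_apply, AlgHom.toLinearMap_apply,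
        map_mul, trace_mul_comm]) (hd u)
  choose f hf using fun u => (ρ u).exists_apply_eq_algebraMap_of_mem_center
    ((Function.surjective_eval u).comp hsplit.2) (hcenter u)
  refine ⟨f, fun u hfu => apply_ne_zero_of_forall_apply_mul_eq_trace hsplit hz hnd (hd u)
    (by rw [hf, hfu, map_zero]), ?_⟩
  intro ι _ _ b b' hbb c u u'
  have hdu : ∑ i, χ u (b i * c) • (↑c⁻¹ * b' i) = d u := eq_of_forall_apply_mul_eq hz hnd
    fun x => (apply_mul_sum_smul_inv_mul z (χ u) b b' hbb c x).trans (hd u x).symm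
  calc _ = χ u' (d u) := by simp [← hdu, χ, map_sum]
    _ = _ := by
      obtain rfl | huu' := eq_or_ne u u'
      · simp [χ, hf, Algebra.algebraMap_eq_smul_one]
      · simp [χ, apply_eq_zero_of_forall_apply_mul_eq hsplit.2 hz hnd huu' (hd u), huu']

/-- 34.14(d): in a split semisimple symmetric algebra with trace form `z` and dual bases
`(c_i), (c'_i)`, for simple modules `E u`, `E u'` and invertible `c`,
`Σ_i tr(c_i c, E u) tr(c⁻¹ c'_i, E u') = δ_{u,u'} f_u dim E_u` with `f_u ∈ K*`
independent of the choices of dual bases and of `c`. -/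
theorem stmt_5 {K C : Type*} [Field K] [Ring C] [Algebra K C] [FiniteDimensional K C]
    {U : Type*} [Fintype U] [DecidableEq U]
    (E : U → Type*) [∀ u, AddCommGroup (E u)] [∀ u, Module K (E u)]
    [∀ u, FiniteDimensional K (E u)] [∀ u, Nontrivial (E u)]
    (ρ : ∀ u, C →ₐ[K] Module.End K (E u))
    (hsplit : Function.Bijective (fun c : C => fun u : U => ρ u c))
    (z : C →ₗ[K] K) (hz : ∀ x y : C, z (x * y) = z (y * x))
    (hnd : ∀ x : C, (∀ y : C, z (x * y) = 0) → x = 0) :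
    ∃ f : U → K, (∀ u, f u ≠ 0) ∧
      ∀ (ι : Type) [Fintype ι] [DecidableEq ι] (b : Module.Basis ι K C) (b' : ι → C),
        (∀ i j : ι, z (b i * b' j) = if i = j then 1 else 0) →
        ∀ (c : Cˣ) (u u' : U),
          (∑ i : ι, LinearMap.trace K (E u) (ρ u (b i * (c : C))) *
              LinearMap.trace K (E u') (ρ u' (((c⁻¹ : Cˣ) : C) * b' i))) =
            (if u = u' then (1 : K) else 0) * f u * (Module.finrank K (E u) : K) :=
  stmt_5_general E ρ hsplit z hz hnd
end

section
/- Let a_{j,f} be finitely many algebraic numbers, indexed by pairs (j,f) with j ∈ ℤ, such that every complex conjugate of a_{j,f} has absolute value q^{(j − 2N)/2} for a fixed prime power q and integer N, and suppose Σ_j (−1)^j Σ_f a_{j,f}^m = Π(q^m) for all integers m ≥ 1, where Π is a polynomial with nonnegative integer coefficients. Then a_{j,f} exists only for even j, and each a_{j,f} with j even equals q^{j/2 − N}. -/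
/-!
Both sides of the identity are exponential sums `m ↦ Σ c_b b ^ m`, and such a sum, known for all
`m ≥ 1`, determines its coefficients at every `b ≠ 0` (Vandermonde). Compare coefficients at
`b = a i`. On the left, every `a i'` equal to `a i` has the same absolute value, hence the same
weight `j i' = j i`, so no cancellation occurs and the coefficient is `± #{i' | a i' = a i} ≠ 0`.
Hence `a i = q ^ k` for some exponent `k` of `Π`, and `q ^ k = √q ^ (j i - 2N)` forces
`j i = 2 (k + N)`.
-/

open Finset

theorem Finset.sum_mul_pow_eq_sum_fiber_mul_pow {R α : Type*} [CommSemiring R] [DecidableEq R]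
    {s : Finset α} {T : Finset R} {v : α → R} (hv : ∀ x ∈ s, v x ∈ T) (w : α → R)
    (m : ℕ) :
    ∑ x ∈ s, w x * v x ^ m = ∑ b ∈ T, (∑ x ∈ s with v x = b, w x) * b ^ m := by
  rw [← sum_fiberwise_of_maps_to hv]
  refine sum_congr rfl fun b _ => ?_
  rw [sum_mul]
  exact sum_congr rfl fun x hx => by rw [(mem_filter.mp hx).2]

section PowerSums

variable {R : Type*} [CommRing R] [IsDomain R]

theorem Finset.eq_zero_of_forall_sum_mul_pow_eq_zero {T : Finset R} {c : R → R}
    (h : ∀ m : ℕ, ∑ b ∈ T, c b * b ^ m = 0) : ∀ b ∈ T, c b = 0 := by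
  intro b hb
  let e := T.equivFin
  have hv : (fun i => c (e.symm i)) = 0 :=
    Matrix.eq_zero_of_forall_pow_sum_mul_pow_eq_zero (f := fun i => (e.symm i : R))
      (Subtype.val_injective.comp e.symm.injective) fun m =>
        (e.symm.sum_comp fun x : T => c x * (x : R) ^ (m : ℕ)).trans
          ((T.sum_coe_sort _).trans (h m))
  simpa using congrFun hv (e ⟨b, hb⟩)

theorem Finset.eq_zero_of_forall_one_le_sum_mul_pow_eq_zero {T : Finset R} {c : R → R}
    (h : ∀ m : ℕ, 1 ≤ m → ∑ b ∈ T, c b * b ^ m = 0) {b : R} (hbT : b ∈ T)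
    (hb : b ≠ 0) :
    c b = 0 := by
  have hshift := eq_zero_of_forall_sum_mul_pow_eq_zero (c := fun b => c b * b) fun m => by
    simpa only [mul_assoc, ← pow_succ'] using h (m + 1) (Nat.le_add_left 1 m)
  exact (mul_eq_zero.mp (hshift b hbT)).resolve_right hb

theorem Finset.sum_fiber_eq_of_forall_sum_mul_pow_eq [DecidableEq R] {α β : Type*}
    {s : Finset α} {t : Finset β} {w v : α → R} {w' v' : β → R}
    (h : ∀ m : ℕ, 1 ≤ m → ∑ x ∈ s, w x * v x ^ m = ∑ y ∈ t, w' y * v' y ^ m)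
    {b : R} (hb : b ≠ 0) :
    ∑ x ∈ s with v x = b, w x = ∑ y ∈ t with v' y = b, w' y := by
  set T := insert b (s.image v ∪ t.image v')
  have hv : ∀ x ∈ s, v x ∈ T := fun x hx =>
    mem_insert_of_mem (mem_union_left _ (mem_image_of_mem v hx))
  have hv' : ∀ y ∈ t, v' y ∈ T := fun y hy =>
    mem_insert_of_mem (mem_union_right _ (mem_image_of_mem v' hy))
  refine sub_eq_zero.mp (eq_zero_of_forall_one_le_sum_mul_pow_eq_zero (T := T)
    (c := fun b => ∑ x ∈ s with v x = b, w x - ∑ y ∈ t with v' y = b, w' y)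
    (fun m hm => ?_) (mem_insert_self b _) hb)
  simp only [sub_mul, sum_sub_distrib, ← sum_mul_pow_eq_sum_fiber_mul_pow hv,
    ← sum_mul_pow_eq_sum_fiber_mul_pow hv', h m hm, sub_self]

end PowerSums

theorem Polynomial.natCast_eval_eq_sum_support {S : Type*} [CommSemiring S] (P : Polynomial ℕ)
    (x : ℕ) : ((P.eval x : ℕ) : S) = ∑ k ∈ P.support, (P.coeff k : S) * (x : S) ^ k := by
  rw [Polynomial.eval_eq_sum, Polynomial.sum_def]
  push_cast
  rfl

theorem Real.sqrt_zpow_right_injective {x : ℝ} (hx : 1 < x) :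
    Function.Injective (√x ^ · : ℤ → ℝ) :=
  zpow_right_injective₀ (Real.sqrt_pos.mpr (by linarith))
    (by rw [Ne, Real.sqrt_eq_one]; exact hx.ne')

theorem Real.natCast_pow_eq_sqrt_zpow (q k : ℕ) : ((q : ℝ) ^ k) = √q ^ (2 * k : ℤ) := by
  rw [zpow_mul, zpow_ofNat, Real.sq_sqrt q.cast_nonneg, zpow_natCast]

theorem stmt_15_general {ι : Type*} [Fintype ι] (q : ℕ)
    (hq : ∃ p n : ℕ, p.Prime ∧ 0 < n ∧ q = p ^ n)
    (N : ℤ) (j : ι → ℤ) (a : ι → ℂ)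
    (habs : ∀ i, ∀ b : ℂ, Polynomial.aeval b (minpoly ℚ (a i)) = 0 →
      ‖b‖ = Real.sqrt q ^ (j i - 2 * N))
    (P : Polynomial ℕ)
    (hsum : ∀ m : ℕ, 1 ≤ m →
      ∑ i : ι, (-1 : ℂ) ^ (j i) * a i ^ m = ((P.eval (q ^ m) : ℕ) : ℂ)) :
    ∀ i, Even (j i) ∧ a i = (q : ℂ) ^ (j i / 2 - N) := by
  have hq1 : (1 : ℝ) < q := by
    obtain ⟨p, n, hp, hn, rfl⟩ := hq
    exact_mod_cast Nat.one_lt_pow hn.ne' hp.one_lt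
  have hnorm i : ‖a i‖ = √q ^ (j i - 2 * N) := habs i (a i) (minpoly.aeval ℚ (a i))
  have hsum' m (hm : 1 ≤ m) : ∑ i, (-1 : ℂ) ^ (j i) * a i ^ m =
      ∑ k ∈ P.support, (P.coeff k : ℂ) * ((q : ℂ) ^ k) ^ m := by
    simp only [hsum m hm, Polynomial.natCast_eval_eq_sum_support, Nat.cast_pow, ← pow_mul,
      mul_comm m]
  intro i
  have hai : a i ≠ 0 := by
    rw [← norm_ne_zero_iff, hnorm]; exact (zpow_pos (by positivity) _).ne'
  have hfiber := sum_fiber_eq_of_forall_sum_mul_pow_eq hsum' hai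
  have hweight i' (h : a i' = a i) : j i' = j i :=
    sub_left_injective (b := 2 * N) <| Real.sqrt_zpow_right_injective hq1 <| by
      simp only [← hnorm, h]
  have hsign : ∑ i' with a i' = a i, (-1 : ℂ) ^ (j i') =
      #{i' | a i' = a i} * (-1 : ℂ) ^ (j i) := by
    rw [← nsmul_eq_mul, ← sum_const]
    exact sum_congr rfl fun i' hi' => by rw [hweight i' (mem_filter.mp hi').2]
  have hcoeff : ∑ k ∈ P.support with (q : ℂ) ^ k = a i, (P.coeff k : ℂ) ≠ 0 := by
    rw [← hfiber, hsign]
    exact mul_ne_zero (Nat.cast_ne_zero.mpr (card_pos.mpr ⟨i, by simp⟩).ne')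
      (zpow_ne_zero _ (by norm_num))
  obtain ⟨k, hk, -⟩ := exists_ne_zero_of_sum_ne_zero hcoeff
  have hqk : (q : ℂ) ^ k = a i := (mem_filter.mp hk).2
  have hexp : 2 * (k : ℤ) = j i - 2 * N := by
    refine Real.sqrt_zpow_right_injective hq1 ?_
    simp only [← Real.natCast_pow_eq_sqrt_zpow, ← hnorm, ← hqk, norm_pow,
      Complex.norm_natCast]
  refine ⟨⟨k + N, by omega⟩, ?_⟩
  rw [show j i / 2 - N = k by omega, zpow_natCast, hqk]

/-- Purity argument from Proposition 35.18: algebraic numbers `a i` (with weights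
`j i ∈ ℤ`) all of whose conjugates have absolute value `√q ^ (j i − 2N)`, satisfying
`Σ_i (−1)^{j i} (a i)^m = Π(q^m)` for all `m ≥ 1` with `Π` a polynomial with
nonnegative integer coefficients, must have every `j i` even and `a i = q^{j i/2 − N}`. -/
theorem stmt_15 {ι : Type*} [Fintype ι] (q : ℕ)
    (hq : ∃ p n : ℕ, p.Prime ∧ 0 < n ∧ q = p ^ n)
    (N : ℤ) (j : ι → ℤ) (a : ι → ℂ)
    (halg : ∀ i, IsAlgebraic ℚ (a i))
    (habs : ∀ i, ∀ b : ℂ, Polynomial.aeval b (minpoly ℚ (a i)) = 0 →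
      ‖b‖ = Real.sqrt q ^ (j i - 2 * N))
    (P : Polynomial ℕ)
    (hsum : ∀ m : ℕ, 1 ≤ m →
      ∑ i : ι, (-1 : ℂ) ^ (j i) * a i ^ m = ((P.eval (q ^ m) : ℕ) : ℂ)) :
    ∀ i, Even (j i) ∧ a i = (q : ℂ) ^ (j i / 2 - N) :=
  stmt_15_general q hq N j a habs P hsum
end

section
/- Let d be an element of finite order a in a group G, let g₀ ∈ G with (d g₀ d⁻¹)(d² g₀ d⁻²)⋯(d^a g₀ d^{-a}) of finite order b, and let R be an operator on a vector space with R^c = 1 satisfying R∘g₀ = (d g₀ d⁻¹)∘R (where G acts on the vector space). Then (R∘g₀)^{abc} = 1; in particular R∘g₀ has finite order. -/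
/-- 35.21(f): if `d ∈ G` with `d^a = 1`, `R` is an operator with `R^c = 1` and
`R ∘ ρ(g) = ρ(d g d⁻¹) ∘ R` for all `g`, and
`g₁ = (d g₀ d⁻¹)(d² g₀ d⁻²)⋯(d^a g₀ d^{−a})` satisfies `g₁^b = 1`, then
`(R ∘ ρ(g₀))^{abc} = 1`; in particular `R ∘ ρ(g₀)` has finite order. -/
theorem stmt_16 {K G V : Type*} [Field K] [Group G] [AddCommGroup V] [Module K V]
    (ρ : Representation K G V) (d g₀ : G) (a b c : ℕ)
    (ha : 0 < a) (hb : 0 < b) (hc : 0 < c)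
    (hd : d ^ a = 1)
    (R : V →ₗ[K] V) (hR : R ^ c = 1)
    (hcomm : ∀ g : G, R * ρ g = ρ (d * g * d⁻¹) * R)
    (hg1 : (((List.range a).map
        (fun t => d ^ (t + 1) * g₀ * (d ^ (t + 1))⁻¹)).prod) ^ b = 1) :
    (R * ρ g₀) ^ (a * b * c) = 1 := by
  set P : ℕ → G := fun n =>
    (((List.range n).map (fun t => d ^ (t + 1) * g₀ * (d ^ (t + 1))⁻¹)).prod) with hP
  -- Lemma A: R^n moves past ρ g at the cost of conjugating by d^n
  have hA : ∀ (n : ℕ) (g : G), R ^ n * ρ g = ρ (d ^ n * g * (d ^ n)⁻¹) * R ^ n := by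
    intro n
    induction n with
    | zero => intro g; simp
    | succ n ih =>
        intro g
        have : R ^ (n + 1) * ρ g = R ^ n * (R * ρ g) := by
          rw [pow_succ, mul_assoc]
        rw [this, hcomm g, ← mul_assoc, ih, mul_assoc, ← pow_succ]
        congr 2
        group
  -- Lemma B: (R * ρ g₀)^n = ρ (P n) * R^n
  have hB : ∀ n : ℕ, (R * ρ g₀) ^ n = ρ (P n) * R ^ n := by
    intro n
    induction n with
    | zero => simp [hP]
    | succ n ih =>
        have hPsucc : P (n + 1) = P n * (d ^ (n + 1) * g₀ * (d ^ (n + 1))⁻¹) := by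
          simp [hP, List.range_succ]
        rw [pow_succ, ih]
        calc ρ (P n) * R ^ n * (R * ρ g₀)
            = ρ (P n) * (R ^ (n + 1) * ρ g₀) := by
              rw [pow_succ, mul_assoc, mul_assoc]
          _ = ρ (P n) * (ρ (d ^ (n + 1) * g₀ * (d ^ (n + 1))⁻¹) * R ^ (n + 1)) := by
              rw [hA]
          _ = ρ (P (n + 1)) * R ^ (n + 1) := by
              simp [hPsucc, map_mul, mul_assoc]
  -- R^a commutes with every ρ g
  have hRa : ∀ g : G, Commute (ρ g) (R ^ a) := by
    intro g
    have := hA a g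
    rw [hd] at this
    simp only [one_mul, inv_one, mul_one] at this
    exact (Commute.eq this).symm
  have key : (R * ρ g₀) ^ (a * b) = R ^ (a * b) := by
    rw [pow_mul, hB a, (hRa (P a)).mul_pow, ← map_pow, hg1, map_one, one_mul,
      ← pow_mul]
  calc (R * ρ g₀) ^ (a * b * c) = ((R * ρ g₀) ^ (a * b)) ^ c := by rw [pow_mul]
    _ = (R ^ (a * b)) ^ c := by rw [key]
    _ = (R ^ c) ^ (a * b) := by rw [← pow_mul, mul_comm, pow_mul]
    _ = 1 := by rw [hR, one_pow]
end

section
/- In the Yokonuma-type Hecke algebra 𝔗 of U-biinvariant functions on G^{0F}, the elements T_s (s ∈ I) defined by T_s = k_{ṡ} Σ_λ √(θ^λ_F(α̌_s(−1))) 1_λ satisfy the quadratic relation T_s² = q + (q−1) Σ_{λ : θ^λ_F∘α̌_s = 1} T_s 1_λ, given the Yokonuma relations k_{ṡ}k_{ṡ} = q·k_{α̌_s(−1)} + Σ_{a∈𝔽_q^*} k_{ṡ} k_{α̌_s(a)} and k_ν k_{ν'} = k_{νν'} for reduced products, and 1_λ = |T^F|⁻¹ Σ_{t∈T^F} θ^λ_F(t)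 k_t. -/
/-!
The `1_λ` are orthogonal idempotents summing to `1` (the two orthogonality relations for the
characters of `T^F`), and `k_t 1_λ = θ^λ(t)⁻¹ 1_λ`. Write `T_s = k_ṡ P` with
`P = Σ_λ √θ^λ(α̌_s(−1)) 1_λ`. Conjugation by `ṡ` permutes the `1_λ` and fixes `α̌_s(−1)`, so `P`
commutes with `k_ṡ` and `T_s² 1_λ = θ^λ(α̌_s(−1)) k_ṡ² 1_λ`. Multiplying the Yokonuma relation by
`1_λ`, the sum `Σ_a k_{α̌_s(a)} 1_λ` is `(q−1) 1_λ` or `0` by orthogonality, and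
`θ^λ(α̌_s(−1))² = 1` turns the first term into `q 1_λ`. Summing over `λ` gives the relation.
-/
open Finset

theorem card_le_card_of_injective_monoidHom {G E ι : Type*} [MulOneClass G] [Fintype G]
    [Field E] [Fintype ι] {c : ι → G →* Eˣ} (hc : Function.Injective c) :
    Fintype.card ι ≤ Fintype.card G := by
  have hinj : Function.Injective fun i => (Units.coeHom E).comp (c i) :=
    fun i j h => hc <| MonoidHom.ext fun g => Units.ext (DFunLike.congr_fun h g)
  simpa [Module.finrank_fintype_fun_eq_card] using
    ((linearIndependent_monoidHom G E).comp _ hinj).fintype_card_le_finrank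

theorem sum_monoidHom_units_eq_ite {G E : Type*} [Group G] [Fintype G] [Field E]
    [DecidableEq (G →* Eˣ)] (χ : G →* Eˣ) :
    ∑ g, (χ g : E) = if χ = 1 then (Fintype.card G : E) else 0 := by
  split_ifs with h
  · simp [h]
  · have hχ : (Units.coeHom E).comp χ ≠ 1 := fun h' =>
      h <| MonoidHom.ext fun g => Units.ext (DFunLike.congr_fun h' g)
    exact sum_hom_units_eq_zero _ hχ

section Duality

variable {G E Λ : Type*} [Group G] [Field E] [Fintype Λ] {θ : Λ → G →* Eˣ}

theorem card_eq_of_bijective_of_separates [Fintype G] (hθ : Function.Bijective θ)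
    (hsep : ∀ t : G, t ≠ 1 → ∃ l, θ l t ≠ 1) : Fintype.card Λ = Fintype.card G := by
  let _ := Fintype.ofBijective θ hθ
  refine le_antisymm (card_le_card_of_injective_monoidHom hθ.1) ?_
  rw [Fintype.card_of_bijective hθ]
  refine card_le_card_of_injective_monoidHom (c := MonoidHom.eval) fun t t' h => ?_
  by_contra hne
  obtain ⟨l, hl⟩ := hsep (t * t'⁻¹) (mul_inv_eq_one.not.mpr hne)
  exact hl <| by simpa [mul_inv_eq_one] using DFunLike.congr_fun h (θ l)

theorem sum_apply_eq_ite_of_bijective [Fintype G] [DecidableEq G] (hθ : Function.Bijective θ)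
    (hsep : ∀ t : G, t ≠ 1 → ∃ l, θ l t ≠ 1) (t : G) :
    ∑ l, (θ l t : E) = if t = 1 then (Fintype.card G : E) else 0 := by
  classical
  split_ifs with ht
  · simp [ht, card_eq_of_bijective_of_separates hθ hsep]
  let _ := Fintype.ofBijective θ hθ
  obtain ⟨l, hl⟩ := hsep t ht
  have hev : MonoidHom.eval t ≠ (1 : (G →* Eˣ) →* Eˣ) := fun h => hl (DFunLike.congr_fun h (θ l))
  rw [hθ.sum_comp (fun χ => (χ t : E))]
  simpa [hev] using sum_monoidHom_units_eq_ite (E := E) (MonoidHom.eval t)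

theorem sum_apply_comp_mulEquiv (hθ : Function.Bijective θ) {M : Type*} [AddCommMonoid M]
    (σ : G ≃* G) (g : (G →* Eˣ) → M) :
    ∑ l, g ((θ l).comp σ.toMonoidHom) = ∑ l, g (θ l) := by
  let Θ := Equiv.ofBijective θ hθ
  refine Fintype.sum_equiv (Θ.trans (σ.symm.monoidHomCongrLeftEquiv.trans Θ.symm)) _ _
    fun l => ?_
  simp [Θ, Equiv.ofBijective_apply_symm_apply]

end Duality

theorem mul_self_mul_eq_smul_of_commute {R A : Type*} [CommSemiring R] [Semiring A] [Algebra R A]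
    {x p e : A} {c : R} (hpx : p * x = x * p) (hpe : p * e = c • e) :
    x * p * (x * p) * e = (c * c) • (x * x * e) := by
  calc x * p * (x * p) * e = x * (p * x) * (p * e) := by simp only [mul_assoc]
    _ = (c * c) • (x * x * e) := by
      rw [hpx, hpe, mul_smul_comm, ← mul_assoc x x p, mul_assoc (x * x) p e, hpe, mul_smul_comm,
        smul_smul]

theorem mul_self_sqrt_of_mul_self_eq_one {R : Type*} [NonAssocRing R] [NoZeroDivisors R]
    {sqrt : R → R} {im : R} (him : im * im = -1) (hs1 : sqrt 1 = 1) (hsm1 : sqrt (-1) = im)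
    {v : R} (hv : v * v = 1) :
    sqrt v * sqrt v = v := by
  rcases mul_self_eq_one_iff.mp hv with rfl | rfl
  · rw [hs1, mul_one]
  · rw [hsm1, him]

section CharIdempotent

variable {E A G : Type*} [Field E] [Ring A] [Algebra E A] [Group G] [Fintype G]

/-- For `χ = θ^λ_F` this is the paper's idempotent `1_λ`. -/
def charIdempotent (kt : G → A) (χ : G →* Eˣ) : A :=
  (Fintype.card G : E)⁻¹ • ∑ t, (χ t : E) • kt t

variable {kt : G → A}

theorem mul_charIdempotent (hkt : ∀ t t', kt t * kt t' = kt (t * t')) (t : G) (χ : G →* Eˣ) :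
    kt t * charIdempotent kt χ = (χ t⁻¹ : E) • charIdempotent kt χ := by
  have hshift : ∑ s, (χ s : E) • kt (t * s) = (χ t⁻¹ : E) • ∑ s, (χ s : E) • kt s := by
    rw [← Equiv.sum_comp (Equiv.mulLeft t) fun s => (χ s : E) • kt s, smul_sum]
    refine sum_congr rfl fun s _ => ?_
    rw [smul_smul, ← Units.val_mul, ← map_mul, Equiv.coe_mulLeft, inv_mul_cancel_left]
  simp only [charIdempotent, mul_smul_comm, mul_sum, hkt, hshift, smul_comm _ (χ t⁻¹ : E)]

theorem charIdempotent_mul_charIdempotent [DecidableEq (G →* Eˣ)]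
    (hkt : ∀ t t', kt t * kt t' = kt (t * t')) (hcard : (Fintype.card G : E) ≠ 0)
    (χ ψ : G →* Eˣ) :
    charIdempotent kt χ * charIdempotent kt ψ = if χ = ψ then charIdempotent kt ψ else 0 := by
  have hsum : ∑ t, (χ t : E) • kt t * charIdempotent kt ψ =
      (∑ t, ((χ / ψ) t : E)) • charIdempotent kt ψ := by
    simp only [smul_mul_assoc, mul_charIdempotent hkt, sum_smul, smul_smul]
    simp [div_eq_mul_inv]
  rw [charIdempotent, smul_mul_assoc, sum_mul, hsum, sum_monoidHom_units_eq_ite]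
  by_cases h : χ = ψ <;> simp [h, smul_smul, hcard, div_eq_one (G := G →* Eˣ)]

theorem sum_mul_charIdempotent (hkt : ∀ t t', kt t * kt t' = kt (t * t')) {H : Type*} [Group H]
    [Fintype H] [DecidableEq (H →* Eˣ)] (φ : H →* G) (χ : G →* Eˣ) :
    ∑ h, kt (φ h) * charIdempotent kt χ =
      (if χ.comp φ = 1 then (Fintype.card H : E) else 0) • charIdempotent kt χ := by
  have hsum : ∑ h, (χ (φ h)⁻¹ : E) = ∑ h, ((χ.comp φ)⁻¹ h : E) := by simp
  simp only [mul_charIdempotent hkt, ← sum_smul, hsum, sum_monoidHom_units_eq_ite,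
    inv_eq_one (α := H →* Eˣ)]

theorem charIdempotent_mul_of_mul_eq {x : A} {σ : G ≃* G} (hx : ∀ t, x * kt t = kt (σ t) * x)
    (χ : G →* Eˣ) : charIdempotent kt χ * x = x * charIdempotent kt (χ.comp σ.toMonoidHom) := by
  simp only [charIdempotent, smul_mul_assoc, mul_smul_comm, sum_mul, mul_sum, hx]
  congr 1
  exact (Fintype.sum_equiv σ.toEquiv _ _ fun t => rfl).symm

theorem sum_charIdempotent_eq_one {Λ : Type*} [Fintype Λ] {θ : Λ → G →* Eˣ}
    (hkone : kt 1 = 1) (hcard : (Fintype.card G : E) ≠ 0) (hθ : Function.Bijective θ)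
    (hsep : ∀ t : G, t ≠ 1 → ∃ l, θ l t ≠ 1) :
    ∑ l, charIdempotent kt (θ l) = 1 := by
  classical
  simp only [charIdempotent, ← smul_sum]
  rw [sum_comm]
  simp only [← sum_smul, sum_apply_eq_ite_of_bijective hθ hsep, ite_smul, zero_smul,
    sum_ite_eq', mem_univ, if_true, hkone, smul_smul, inv_mul_cancel₀ hcard, one_smul]

variable {Λ : Type*} [Fintype Λ] {θ : Λ → G →* Eˣ}

theorem sum_smul_charIdempotent_mul (hkt : ∀ t t', kt t * kt t' = kt (t * t'))
    (hcard : (Fintype.card G : E) ≠ 0) (hθ : Function.Injective θ) (f : Λ → E) (l : Λ) :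
    (∑ l', f l' • charIdempotent kt (θ l')) * charIdempotent kt (θ l) =
      f l • charIdempotent kt (θ l) := by
  classical
  simp only [sum_mul, smul_mul_assoc, charIdempotent_mul_charIdempotent hkt hcard, hθ.eq_iff,
    smul_ite, smul_zero, sum_ite_eq', mem_univ, if_true]

theorem sum_smul_charIdempotent_mul_comm (hθ : Function.Bijective θ) {x : A} {σ : G ≃* G}
    (hx : ∀ t, x * kt t = kt (σ t) * x) {f : (G →* Eˣ) → E}
    (hf : ∀ χ, f (χ.comp σ.toMonoidHom) = f χ) :
    (∑ l, f (θ l) • charIdempotent kt (θ l)) * x = x * ∑ l, f (θ l) • charIdempotent kt (θ l) := by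
  calc (∑ l, f (θ l) • charIdempotent kt (θ l)) * x
      = x * ∑ l, f ((θ l).comp σ.toMonoidHom) •
          charIdempotent kt ((θ l).comp σ.toMonoidHom) := by
        simp only [sum_mul, mul_sum, smul_mul_assoc, mul_smul_comm,
          charIdempotent_mul_of_mul_eq hx, hf]
    _ = x * ∑ l, f (θ l) • charIdempotent kt (θ l) := by
        rw [sum_apply_comp_mulEquiv hθ σ fun χ => f χ • charIdempotent kt χ]

theorem mul_self_mul_charIdempotent {H : Type*} [Group H] [Fintype H] [DecidableEq (H →* Eˣ)]
    (hkt : ∀ t t', kt t * kt t' = kt (t * t')) {x : A} {q : E} {m : G} {φ : H →* G}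
    (hquad : x * x = q • kt m + ∑ h, x * kt (φ h)) (χ : G →* Eˣ) :
    x * x * charIdempotent kt χ = (q * χ m⁻¹) • charIdempotent kt χ +
      (if χ.comp φ = 1 then (Fintype.card H : E) else 0) • (x * charIdempotent kt χ) := by
  rw [hquad, add_mul, smul_mul_assoc, mul_charIdempotent hkt, smul_smul, sum_mul]
  simp only [mul_assoc]
  rw [← mul_sum, sum_mul_charIdempotent hkt, mul_smul_comm]

theorem mul_self_mul_charIdempotent_of_commute {H : Type*} [Group H] [Fintype H]
    [DecidableEq (H →* Eˣ)] (hkt : ∀ t t', kt t * kt t' = kt (t * t')) {x p : A} {q c : E} {m : G}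
    {φ : H →* G} {χ : G →* Eˣ} (hquad : x * x = q • kt m + ∑ h, x * kt (φ h))
    (hpx : p * x = x * p) (hpe : p * charIdempotent kt χ = c • charIdempotent kt χ)
    (hc : c * c = χ m) (hc1 : χ.comp φ = 1 → c = 1) :
    x * p * (x * p) * charIdempotent kt χ = q • charIdempotent kt χ +
      if χ.comp φ = 1 then (Fintype.card H : E) • (x * p * charIdempotent kt χ) else 0 := by
  have hm : (χ m : E) * χ m⁻¹ = 1 := by
    rw [← Units.val_mul, ← map_mul, mul_inv_cancel, map_one, Units.val_one]
  rw [mul_self_mul_eq_smul_of_commute hpx hpe, hc, mul_self_mul_charIdempotent hkt hquad, smul_add,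
    smul_smul, mul_left_comm, hm, mul_one]
  congr 1
  split_ifs with h
  · rw [mul_assoc, hpe, mul_smul_comm, hc1 h, one_smul, ← hc, hc1 h, mul_one, one_smul]
  · rw [zero_smul, smul_zero]

end CharIdempotent

/-- 35.3: in the Yokonuma-type Hecke algebra (basis elements `kt t` for the torus
points, `kds` for the simple reflection, idempotents `1_λ` built from the characters
`θ λ`), the element `T_s = kds * Σ_λ √(θ^λ(α̌_s(−1))) 1_λ` satisfies the quadratic
relation `T_s² = q + (q−1) Σ_{λ : θ^λ∘α̌_s = 1} T_s 1_λ`. -/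
theorem stmt_17 {E A TF Fq Λ : Type*} [Field E] [Ring A] [Algebra E A]
    [CommGroup TF] [Fintype TF] [Field Fq] [Fintype Fq]
    [DecidableEq Fq] [Fintype Λ] [DecidableEq Λ]
    (kt : TF → A) (kds : A) (chk : Fqˣ →* TF) (σ : TF ≃* TF)
    (θ : Λ → TF →* Eˣ) (sqrt : E → E) (im : E)
    [DecidablePred fun l : Λ => ∀ a : Fqˣ, θ l (chk a) = 1]
    (hcard : (Fintype.card TF : E) ≠ 0)
    (hkt : ∀ t t' : TF, kt t * kt t' = kt (t * t'))
    (hkone : kt 1 = 1)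
    (hcomm : ∀ t : TF, kds * kt t = kt (σ t) * kds)
    (hσ : ∀ a : Fqˣ, σ (chk a) = chk a⁻¹)
    (hθinj : Function.Injective θ)
    (hθall : ∀ χ : TF →* Eˣ, ∃ l : Λ, θ l = χ)
    (hsep : ∀ t : TF, t ≠ 1 → ∃ l : Λ, θ l t ≠ 1)
    (him : im * im = -1) (hs1 : sqrt 1 = 1) (hsm1 : sqrt (-1) = im)
    (hquad : kds * kds = (Fintype.card Fq : E) • kt (chk (-1)) +
      ∑ aa : Fqˣ, kds * kt (chk aa)) :
    let onel : Λ → A := fun l => (Fintype.card TF : E)⁻¹ •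
      ∑ t : TF, ((θ l t : Eˣ) : E) • kt t
    let Ts : A := kds * ∑ l : Λ, sqrt ((θ l (chk (-1)) : Eˣ) : E) • onel l
    Ts * Ts = (Fintype.card Fq : E) • (1 : A) +
      ((Fintype.card Fq : E) - 1) •
        ∑ l ∈ Finset.univ.filter (fun l : Λ => ∀ aa : Fqˣ, θ l (chk aa) = 1),
          Ts * onel l := by
  intro onel Ts
  classical
  set m : TF := chk (-1)
  set c : (TF →* Eˣ) → E := fun χ => sqrt (χ m)
  have hmm : m * m = 1 := by rw [← map_mul, neg_one_mul, neg_neg, map_one]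
  have hc : ∀ χ : TF →* Eˣ, c χ * c χ = χ m := fun χ =>
    mul_self_sqrt_of_mul_self_eq_one him hs1 hsm1 <| by
      rw [← Units.val_mul, ← map_mul, hmm, map_one, Units.val_one]
  have hc1 : ∀ χ : TF →* Eˣ, χ.comp chk = 1 → c χ = 1 := fun χ h => by
    simp only [c, show χ m = 1 from DFunLike.congr_fun h (-1), Units.val_one, hs1]
  have hsum : ∑ l, onel l = 1 := sum_charIdempotent_eq_one hkone hcard ⟨hθinj, hθall⟩ hsep
  have hPx : (∑ l, c (θ l) • onel l) * kds = kds * ∑ l, c (θ l) • onel l :=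
    sum_smul_charIdempotent_mul_comm ⟨hθinj, hθall⟩ hcomm fun χ => by simp [c, m, hσ]
  have hq : (Fintype.card Fqˣ : E) = Fintype.card Fq - 1 := by
    rw [Fintype.card_units, Nat.cast_sub Fintype.card_pos, Nat.cast_one]
  have key : ∀ l, Ts * Ts * onel l = (Fintype.card Fq : E) • onel l +
      if ∀ a, θ l (chk a) = 1 then ((Fintype.card Fq : E) - 1) • (Ts * onel l) else 0 :=
    fun l => by
      refine (mul_self_mul_charIdempotent_of_commute hkt hquad hPx
        (sum_smul_charIdempotent_mul hkt hcard hθinj _ l) (hc _) (hc1 _)).trans ?_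
      simp only [hq, MonoidHom.ext_iff, MonoidHom.comp_apply, MonoidHom.one_apply]
      rfl
  calc Ts * Ts = ∑ l, Ts * Ts * onel l := by rw [← mul_sum, hsum, mul_one]
    _ = _ := by
      simp only [key, sum_add_distrib, ← smul_sum, hsum, sum_ite, sum_const_zero, add_zero]
end

section
/- Define the A-linear map τ : H_n → A by τ(T̃_w 1_λ) = δ_{w,1}, and the bilinear form (x,x') = τ(xx'). Then for all w, w' ∈ W and λ, λ' ∈ ufs_n, one has (T̃_w 1_λ, T̃_{w'} 1_{λ'}) = δ_{w⁻¹,w'} δ_{λ, w'λ'}; in particular the form is symmetric and the basis {T̃_w 1_λ} is dual to {T̃_{w⁻¹} 1_{wλ}}. -/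
/-!
Moving the idempotents past `T̃_{w'}` reduces the claim to `τ(T̃_w T̃_{w'} 1_μ) = δ_{ww',1}`,
proved by induction on `ℓ(w')`. Write `w' = s w''` reducedly. If `ℓ(ws) > ℓ(w)` then
`T̃_w T̃_s = T̃_{ws}`; otherwise the quadratic relation gives
`T̃_w T̃_s = T̃_{ws} + Σ_λ a_λ T̃_w 1_λ`, and each correction term contributes a multiple of
`τ(T̃_w T̃_{w''} 1_μ) = δ_{ww'',1}`, which vanishes because `s` is a right descent of `w` but
not a left descent of `w''`.
-/

namespace CoxeterSystem

variable {B W : Type*} [Group W] {M : CoxeterMatrix B} (cs : CoxeterSystem M W)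

theorem mul_ne_one_of_isRightDescent_of_not_isLeftDescent {w v : W} {i : B}
    (hw : cs.IsRightDescent w i) (hv : ¬cs.IsLeftDescent v i) : w * v ≠ 1 := by
  intro h
  rw [eq_inv_of_mul_eq_one_left h, isRightDescent_inv_iff] at hw
  exact hv hw

end CoxeterSystem

section HeckeTrace

open CoxeterSystem

variable {B W Λ R H : Type*} [Group W] [CommRing R] [Ring H] [Algebra R H]
  {M : CoxeterMatrix B} (cs : CoxeterSystem M W) {Tt : W → H} {e : Λ → H}

theorem Tt_mul_e_mul_Tt_mul_e [MulAction W Λ] [DecidableEq Λ]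
    (hidem : ∀ lam, e lam * e lam = e lam) (horth : ∀ lam mu, lam ≠ mu → e lam * e mu = 0)
    (hcomm : ∀ (w : W) (lam : Λ), Tt w * e lam = e (w • lam) * Tt w) (w v : W) (lam mu : Λ) :
    Tt w * e lam * (Tt v * e mu) = if v⁻¹ • lam = mu then Tt w * Tt v * e mu else 0 := by
  have hswap : e lam * Tt v = Tt v * e (v⁻¹ • lam) := by rw [hcomm, smul_inv_smul]
  calc Tt w * e lam * (Tt v * e mu) = Tt w * Tt v * (e (v⁻¹ • lam) * e mu) := by
        rw [mul_assoc, ← mul_assoc (e lam), hswap]; simp only [mul_assoc]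
    _ = _ := by
        split_ifs with h
        · rw [h, hidem]
        · rw [horth _ _ h, mul_zero]

theorem Tt_eq_simple_mul_of_isLeftDescent
    (hmul : ∀ w v : W, cs.length (w * v) = cs.length w + cs.length v → Tt w * Tt v = Tt (w * v))
    {w : W} {i : B} (hi : cs.IsLeftDescent w i) :
    Tt w = Tt (cs.simple i) * Tt (cs.simple i * w) := by
  rw [hmul _ _ ?_, simple_mul_simple_cancel_left]
  rw [simple_mul_simple_cancel_left, length_simple, ← cs.isLeftDescent_iff.mp hi, add_comm]

theorem Tt_mul_simple_of_not_isRightDescent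
    (hmul : ∀ w v : W, cs.length (w * v) = cs.length w + cs.length v → Tt w * Tt v = Tt (w * v))
    {w : W} {i : B} (hi : ¬cs.IsRightDescent w i) :
    Tt w * Tt (cs.simple i) = Tt (w * cs.simple i) :=
  hmul _ _ (by rw [length_simple, cs.not_isRightDescent_iff.mp hi])

theorem Tt_mul_simple_of_isRightDescent [Fintype Λ]
    (hmul : ∀ w v : W, cs.length (w * v) = cs.length w + cs.length v → Tt w * Tt v = Tt (w * v))
    {i : B} (hquad : ∃ a : Λ → R, Tt (cs.simple i) * Tt (cs.simple i) =
      1 + ∑ lam, a lam • (Tt (cs.simple i) * e lam))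
    {w : W} (hi : cs.IsRightDescent w i) :
    ∃ a : Λ → R,
      Tt w * Tt (cs.simple i) = Tt (w * cs.simple i) + ∑ lam, a lam • (Tt w * e lam) := by
  obtain ⟨a, ha⟩ := hquad
  have hsplit : Tt (w * cs.simple i) * Tt (cs.simple i) = Tt w := by
    rw [Tt_mul_simple_of_not_isRightDescent cs hmul, simple_mul_simple_cancel_right]
    rwa [← isRightDescent_iff_not_isRightDescent_mul]
  refine ⟨a, ?_⟩
  conv_lhs => rw [← hsplit, mul_assoc, ha]
  simp only [mul_add, mul_one, Finset.mul_sum, mul_smul_comm, ← mul_assoc, hsplit]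

theorem tau_Tt_mul_Tt_mul_e [MulAction W Λ] [Fintype Λ] [DecidableEq W] (hone : Tt 1 = 1)
    (hidem : ∀ lam, e lam * e lam = e lam) (horth : ∀ lam mu, lam ≠ mu → e lam * e mu = 0)
    (hcomm : ∀ (w : W) (lam : Λ), Tt w * e lam = e (w • lam) * Tt w)
    (hmul : ∀ w v : W, cs.length (w * v) = cs.length w + cs.length v → Tt w * Tt v = Tt (w * v))
    (hquad : ∀ i : B, ∃ a : Λ → R, Tt (cs.simple i) * Tt (cs.simple i) =
      1 + ∑ lam, a lam • (Tt (cs.simple i) * e lam))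
    (τ : H →ₗ[R] R) (hτ : ∀ w lam, τ (Tt w * e lam) = if w = 1 then 1 else 0)
    (w v : W) (mu : Λ) : τ (Tt w * Tt v * e mu) = if w * v = 1 then 1 else 0 := by
  classical
  induction hn : cs.length v using Nat.strong_induction_on generalizing w v with
  | _ n ih =>
  rcases eq_or_ne v 1 with rfl | hv
  · rw [hone, mul_one, hτ, mul_one]
  obtain ⟨i, hi⟩ := cs.exists_leftDescent_of_ne_one hv
  have hlt : cs.length (cs.simple i * v) < n := hn ▸ hi
  have hsv := cs.isLeftDescent_iff_not_isLeftDescent_mul.mp hi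
  have hwv : w * cs.simple i * (cs.simple i * v) = w * v := by simp [mul_assoc]
  have hexpand : Tt w * Tt v * e mu = Tt w * Tt (cs.simple i) * (Tt (cs.simple i * v) * e mu) := by
    rw [Tt_eq_simple_mul_of_isLeftDescent cs hmul hi]; simp only [mul_assoc]
  rw [hexpand]
  by_cases hd : cs.IsRightDescent w i
  · obtain ⟨a, ha⟩ := Tt_mul_simple_of_isRightDescent cs hmul (hquad i) hd
    have hvanish : τ (Tt w * Tt (cs.simple i * v) * e mu) = 0 := by
      rw [ih _ hlt w _ rfl, if_neg (cs.mul_ne_one_of_isRightDescent_of_not_isLeftDescent hd hsv)]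
    rw [ha, add_mul, map_add, ← mul_assoc, ih _ hlt _ _ rfl, hwv, Finset.sum_mul, map_sum,
      add_eq_left]
    refine Finset.sum_eq_zero fun lam _ => ?_
    rw [smul_mul_assoc, map_smul, Tt_mul_e_mul_Tt_mul_e hidem horth hcomm, apply_ite τ, hvanish,
      map_zero, ite_self, smul_zero]
  · rw [← mul_assoc, Tt_mul_simple_of_not_isRightDescent cs hmul hd, ih _ hlt _ _ rfl, hwv]

end HeckeTrace

theorem stmt_19_general {B W Λ H : Type*} [Group W] [DecidableEq W] [Fintype Λ] [DecidableEq Λ] (M : CoxeterMatrix B)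
    (cs : CoxeterSystem M W) [MulAction W Λ]
    [Ring H] [Algebra (LaurentPolynomial ℤ) H]
    (Tt : W → H) (e : Λ → H)
    (Wmem : W → Λ → Prop) [∀ s lam, Decidable (Wmem s lam)]
    (hone : Tt 1 = 1)
    (h1 : ∀ lam : Λ, e lam * e lam = e lam)
    (h2 : ∀ lam mu : Λ, lam ≠ mu → e lam * e mu = 0)
    (h3 : ∀ w w' : W, cs.length (w * w') = cs.length w + cs.length w' →
      Tt w * Tt w' = Tt (w * w'))
    (h4 : ∀ (w : W) (lam : Λ), Tt w * e lam = e (w • lam) * Tt w)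
    (h5 : ∀ i : B, Tt (cs.simple i) * Tt (cs.simple i) = 1 +
        ((LaurentPolynomial.T 1 - LaurentPolynomial.T (-1) : LaurentPolynomial ℤ)) •
          ∑ lam : Λ, (if Wmem (cs.simple i) lam then Tt (cs.simple i) * e lam else 0))
    (τ : H →ₗ[LaurentPolynomial ℤ] LaurentPolynomial ℤ)
    (hτ : ∀ (w : W) (lam : Λ), τ (Tt w * e lam) = if w = 1 then 1 else 0) :
    ∀ (w w' : W) (lam lam' : Λ),
      τ ((Tt w * e lam) * (Tt w' * e lam')) =
        if w⁻¹ = w' ∧ lam = w' • lam' then 1 else 0 := by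
  have hquad (i : B) : ∃ a : Λ → LaurentPolynomial ℤ, Tt (cs.simple i) * Tt (cs.simple i) =
      1 + ∑ lam, a lam • (Tt (cs.simple i) * e lam) :=
    ⟨fun lam => if Wmem (cs.simple i) lam then LaurentPolynomial.T 1 - LaurentPolynomial.T (-1)
      else 0, by simp only [h5, Finset.smul_sum, smul_ite, ite_smul, smul_zero, zero_smul]⟩
  intro w w' lam lam'
  rw [Tt_mul_e_mul_Tt_mul_e h1 h2 h4, apply_ite τ, map_zero,
    tau_Tt_mul_Tt_mul_e cs hone h1 h2 h4 h3 hquad τ hτ, ← ite_and]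
  refine if_congr ?_ rfl rfl
  rw [inv_smul_eq_iff, mul_eq_one_iff_inv_eq, and_comm]

/-- 34.13: in the Hecke algebra `H_n` (for a Coxeter system `(W,S)`) with basis
`T̃_w 1_λ` and the linear functional `τ(T̃_w 1_λ) = δ_{w,1}`, the bilinear form
`(x,x') = τ(xx')` satisfies
`(T̃_w 1_λ, T̃_{w'} 1_{λ'}) = δ_{w⁻¹,w'} δ_{λ, w'λ'}`. -/
theorem stmt_19 {B W Λ H : Type*} [Group W] [DecidableEq W] [Fintype Λ] [DecidableEq Λ] (M : CoxeterMatrix B)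
    (cs : CoxeterSystem M W) [MulAction W Λ]
    [Ring H] [Algebra (LaurentPolynomial ℤ) H]
    (Tt : W → H) (e : Λ → H)
    (bb : Module.Basis (W × Λ) (LaurentPolynomial ℤ) H)
    (hbb : ∀ p : W × Λ, bb p = Tt p.1 * e p.2)
    (Wmem : W → Λ → Prop) [∀ s lam, Decidable (Wmem s lam)]
    (hone : Tt 1 = 1)
    (h1 : ∀ lam : Λ, e lam * e lam = e lam)
    (h2 : ∀ lam mu : Λ, lam ≠ mu → e lam * e mu = 0)
    (hsum : (1 : H) = ∑ lam : Λ, e lam)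
    (h3 : ∀ w w' : W, cs.length (w * w') = cs.length w + cs.length w' →
      Tt w * Tt w' = Tt (w * w'))
    (h4 : ∀ (w : W) (lam : Λ), Tt w * e lam = e (w • lam) * Tt w)
    (h5 : ∀ i : B, Tt (cs.simple i) * Tt (cs.simple i) = 1 +
        ((LaurentPolynomial.T 1 - LaurentPolynomial.T (-1) : LaurentPolynomial ℤ)) •
          ∑ lam : Λ, (if Wmem (cs.simple i) lam then Tt (cs.simple i) * e lam else 0))
    (hWmem : ∀ (i : B) (lam : Λ), Wmem (cs.simple i) lam → cs.simple i • lam = lam)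
    (τ : H →ₗ[LaurentPolynomial ℤ] LaurentPolynomial ℤ)
    (hτ : ∀ (w : W) (lam : Λ), τ (Tt w * e lam) = if w = 1 then 1 else 0) :
    ∀ (w w' : W) (lam lam' : Λ),
      τ ((Tt w * e lam) * (Tt w' * e lam')) =
        if w⁻¹ = w' ∧ lam = w' • lam' then 1 else 0 :=
  stmt_19_general M cs Tt e Wmem hone h1 h2 h3 h4 h5 τ hτ
end
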